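/- Every derivation under the priority semantics ω_p of CHR^rp is also a derivation under the theoretical operational semantics ω_t of CHR, and every state that is a final state under ω_p (no ω_p transition applies) is also a final state under ω_t. -/

import Mathlib

/-- An abstract model of the transition system of a CHR^rp program.  A CHR^rp execution
state is abstracted to an element of `State`; `Inst` is the type of ground rule
instances (a rule together with a matching substitution).  `solve` and `introduce` are
the `Solve` and `Introduce` transitions, which are shared by the priority semantics ω_p
and the theoretical operational semantics ω_t.  `applyInst σ i σ'` expresses that the
`Apply` transition can fire the rule instance `i` in state `σ` yielding `σ'`, where all
conditions of `Apply` *except* the priority condition are required (heads matched by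
stored constraints, guard entailed, ground priority, history tuple not in the
propagation history).  `prio i` is the (numerical) priority of instance `i`; a priority
is higher when it is numerically smaller. -/
structure CHRSystem (State Inst : Type*) where
  solve : State → State → Prop
  introduce : State → State → Prop
  applyInst : State → Inst → State → Prop
  prio : Inst → ℕ

namespace CHRSystem

variable {State Inst : Type*} (sys : CHRSystem State Inst)

/-- A rule instance is applicable in a state if the `Apply` transition could fire it,
ignoring priorities. -/
def Applicable (σ : State) (i : Inst) : Prop := ∃ σ', sys.applyInst σ i σ'

/-- One transition of the theoretical operational semantics ω_t of CHR:
`Solve`, `Introduce`, or `Apply` ignoring rule priorities. -/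
def StepT (σ σ' : State) : Prop :=
  sys.solve σ σ' ∨ sys.introduce σ σ' ∨ ∃ i, sys.applyInst σ i σ'

/-- One transition of the priority semantics ω_p of CHR^rp: `Solve`, `Introduce`, or
`Apply` of a rule instance such that no applicable rule instance has a strictly
higher priority (numerically smaller priority value). -/
def StepP (σ σ' : State) : Prop :=
  sys.solve σ σ' ∨ sys.introduce σ σ' ∨
    ∃ i, sys.applyInst σ i σ' ∧ ∀ j, sys.Applicable σ j → sys.prio i ≤ sys.prio j

end CHRSystem

/-!
Every ω_p transition is an ω_t transition, since ω_p only adds the priority side condition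
to `Apply`. Conversely, if some ω_t transition is possible then so is an ω_p one: `Solve` and
`Introduce` are shared, and if some rule instance is applicable, then one of numerically
least priority is, because priorities are natural numbers.
-/

namespace CHRSystem

variable {State Inst : Type*} (sys : CHRSystem State Inst)

theorem stepT_of_stepP {σ σ' : State} (h : sys.StepP σ σ') : sys.StepT σ σ' := by
  rcases h with hsolve | hintro | ⟨i, hi, -⟩
  · exact Or.inl hsolve
  · exact Or.inr (Or.inl hintro)
  · exact Or.inr (Or.inr ⟨i, hi⟩)

theorem exists_applicable_prio_min {σ : State} {i : Inst} (hi : sys.Applicable σ i) :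
    ∃ j, sys.Applicable σ j ∧ ∀ k, sys.Applicable σ k → sys.prio j ≤ sys.prio k :=
  ⟨Function.argminOn sys.prio {j | sys.Applicable σ j} ⟨i, hi⟩,
    Function.argminOn_mem sys.prio {j | sys.Applicable σ j} _, fun _ hk => Function.argminOn_le sys.prio _ hk⟩

theorem exists_stepP_of_stepT {σ σ' : State} (h : sys.StepT σ σ') : ∃ τ, sys.StepP σ τ := by
  rcases h with hsolve | hintro | ⟨i, hi⟩
  · exact ⟨σ', Or.inl hsolve⟩
  · exact ⟨σ', Or.inr (Or.inl hintro)⟩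
  · obtain ⟨j, ⟨τ, hj⟩, hmin⟩ := sys.exists_applicable_prio_min ⟨σ', hi⟩
    exact ⟨τ, Or.inr (Or.inr ⟨j, hj, hmin⟩)⟩

end CHRSystem

/-- Every derivation under the priority semantics ω_p of CHR^rp is also a derivation
under the theoretical operational semantics ω_t of CHR, and every state that is final
under ω_p (no ω_p transition applies) is also a final state under ω_t. -/
theorem omegaP_derivations_are_omegaT_derivations_and_final_states_agree
    {State Inst : Type*} (sys : CHRSystem State Inst) :
    (∀ (L : ℕ) (f : ℕ → State),
      (∀ i < L, sys.StepP (f i) (f (i + 1))) → ∀ i < L, sys.StepT (f i) (f (i + 1))) ∧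
    (∀ σ : State, (¬ ∃ σ', sys.StepP σ σ') → ¬ ∃ σ', sys.StepT σ σ') :=
  ⟨fun _ _ hP i hi => sys.stepT_of_stepP (hP i hi),
    fun _ hfinal ⟨_, hT⟩ => hfinal (sys.exists_stepP_of_stepT hT)⟩
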